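/- A symmetric relation R is a governed bisimulation if and only if R is a symmetric direct simulation relation. Consequently governed bisimilarity (the largest governed bisimulation) is an equivalence relation. -/
import Mathlib


universe u

/-- A parity game: a directed graph with a total edge relation, a priority
function and an owner function (`true` = player even, `false` = player odd). -/
structure ParityGame (V : Type u) where
  edge : V → V → Prop
  total : ∀ v, ∃ w, edge v w
  prio : V → ℕ
  owner : V → Bool

namespace ParityGame

variable {V : Type u}

/-- A (history-dependent) strategy: given the history of previously visited
vertices and the current vertex, choose a successor.  Only the values at
vertices owned by the given player matter. -/
abbrev Strategy (V : Type u) : Type u := List V → V → V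

variable (G : ParityGame V)

/-- A strategy is valid for player `i` if it always proposes edges. -/
def ValidStrategy (i : Bool) (σ : Strategy V) : Prop :=
  ∀ h v, G.owner v = i → G.edge v (σ h v)

/-- A memoryless strategy only depends on the current vertex. -/
def Memoryless (σ : Strategy V) : Prop := ∀ h h' v, σ h v = σ h' v

/-- An (infinite) play is an infinite path in the game graph. -/
def IsPlay (p : ℕ → V) : Prop := ∀ n, G.edge (p n) (p (n + 1))

/-- The history of a play before position `n`. -/
def hist (p : ℕ → V) (n : ℕ) : List V := List.ofFn (fun k : Fin n => p k)

/-- A play is consistent with a strategy `σ` of player `i` if at every vertex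
owned by `i` the play follows `σ`. -/
def Consistent (i : Bool) (σ : Strategy V) (p : ℕ → V) : Prop :=
  ∀ n, G.owner (p n) = i → p (n + 1) = σ (hist p n) (p n)

/-- `G.ForcesVia i σ v U T`: every play from `v` consistent with `σ` reaches
`T`, all earlier vertices lying in `U`. -/
def ForcesVia (i : Bool) (σ : Strategy V) (v : V) (U T : Set V) : Prop :=
  ∀ p : ℕ → V, G.IsPlay p → G.Consistent i σ p → p 0 = v →
    ∃ n, p n ∈ T ∧ ∀ j < n, p j ∈ U

/-- `v ⇒_{i,U} T`: player `i` has a memoryless strategy forcing every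
consistent play from `v` to reach `T` while staying in `U` beforehand. -/
def Forces (i : Bool) (v : V) (U T : Set V) : Prop :=
  ∃ σ : Strategy V, G.ValidStrategy i σ ∧ Memoryless σ ∧ G.ForcesVia i σ v U T

/-- Every play from `v` consistent with `σ` stays in `U` forever. -/
def DivergesVia (i : Bool) (σ : Strategy V) (v : V) (U : Set V) : Prop :=
  ∀ p : ℕ → V, G.IsPlay p → G.Consistent i σ p → p 0 = v → ∀ n, p n ∈ U

/-- `v ⇒^ω_{i,U}`: player `i` has a memoryless strategy keeping all
consistent plays from `v` forever inside `U`. -/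
def Diverges (i : Bool) (v : V) (U : Set V) : Prop :=
  ∃ σ : Strategy V, G.ValidStrategy i σ ∧ Memoryless σ ∧ G.DivergesVia i σ v U

/-- Priority `k` occurs infinitely often on the play `p`. -/
def InfOften (p : ℕ → V) (k : ℕ) : Prop := ∀ N, ∃ n, N ≤ n ∧ G.prio (p n) = k

/-- Player even wins a play iff the least priority occurring infinitely often
is even. -/
def EvenWinsPlay (p : ℕ → V) : Prop := Even (sInf {k | G.InfOften p k})

/-- Player `i` wins the play `p`. -/
def WinsPlay (i : Bool) (p : ℕ → V) : Prop := G.EvenWinsPlay p ↔ i = true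

/-- `σ` is a winning strategy for player `i` from `v`. -/
def WinningFrom (i : Bool) (σ : Strategy V) (v : V) : Prop :=
  ∀ p : ℕ → V, G.IsPlay p → G.Consistent i σ p → p 0 = v → G.WinsPlay i p

end ParityGame

namespace ParityGame

variable {V : Type u} (G : ParityGame V)

/-- `w →_even S`: player even can ensure that the move from `w` ends in `S`:
if `w` is even-owned some successor of `w` is in `S`; if `w` is odd-owned all
successors of `w` are in `S`. -/
def stepEven (w : V) (S : Set V) : Prop :=
  if G.owner w = true then ∃ w', G.edge w w' ∧ w' ∈ S
  else ∀ w', G.edge w w' → w' ∈ S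

/-- Coinductive direct simulation relations. -/
def IsDirectSim (R : V → V → Prop) : Prop :=
  ∀ v w, R v w →
    G.prio v = G.prio w ∧
    (G.owner v = true → ∀ v', G.edge v v' → G.stepEven w {w' | R v' w'}) ∧
    (G.owner v = false → G.stepEven w {w' | ∃ v', G.edge v v' ∧ R v' w'})

/-- The direct simulation preorder `v ≤_d w`. -/
def dsim (v w : V) : Prop := ∃ R, G.IsDirectSim R ∧ R v w

end ParityGame

namespace ParityGame

variable {V : Type u} (G : ParityGame V)

/-- The governed bisimulation transfer conditions (for a symmetric relation). -/
def GovBisimCond (R : V → V → Prop) : Prop :=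
  ∀ v w, R v w →
    G.prio v = G.prio w ∧
    (G.owner v ≠ G.owner w → ∀ v' w', G.edge v v' → G.edge w w' → R v' w') ∧
    (∀ v', G.edge v v' → ∃ w', G.edge w w' ∧ R v' w')

end ParityGame

section Aux

variable {V : Type u} {G : ParityGame V}

lemma govBisim_comp_aux {R₁ R₂ : V → V → Prop}
    (h₁ : G.GovBisimCond R₁) (h₂ : G.GovBisimCond R₂)
    (s₂ : Symmetric R₂) {v w u : V} (hvw : R₁ v w) (hwu : R₂ w u) :
    G.prio v = G.prio u ∧
    (G.owner v ≠ G.owner u → ∀ v' u', G.edge v v' → G.edge u u' →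
      ∃ x, R₁ v' x ∧ R₂ x u') ∧
    (∀ v', G.edge v v' → ∃ u', G.edge u u' ∧ ∃ x, R₁ v' x ∧ R₂ x u') := by
  obtain ⟨p1, c1, t1⟩ := h₁ v w hvw
  obtain ⟨p2, c2, t2⟩ := h₂ w u hwu
  refine ⟨p1.trans p2, ?_, ?_⟩
  · intro hne v' u' hv hu
    by_cases hwu' : G.owner w = G.owner u
    · have hvw' : G.owner v ≠ G.owner w := fun h => hne (h.trans hwu')
      obtain ⟨w', hw', hr⟩ := (h₂ u w (s₂ hwu)).2.2 u' hu
      exact ⟨w', c1 hvw' v' w' hv hw', s₂ hr⟩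
    · obtain ⟨w', hw', hr⟩ := t1 v' hv
      exact ⟨w', hr, c2 hwu' w' u' hw' hu⟩
  · intro v' hv
    obtain ⟨w', hw', hr1⟩ := t1 v' hv
    obtain ⟨u', hu', hr2⟩ := t2 w' hw'
    exact ⟨u', hu', w', hr1, hr2⟩

end Aux

/-- A symmetric relation is a governed bisimulation iff it is a (symmetric)
direct simulation; consequently governed bisimilarity is an equivalence. -/
theorem govBisim_iff_symm_directSim {V : Type u} [Fintype V]
    (G : ParityGame V) :
    (∀ R : V → V → Prop, Symmetric R → (G.GovBisimCond R ↔ G.IsDirectSim R)) ∧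
    Equivalence (fun v w => ∃ R : V → V → Prop,
      Symmetric R ∧ G.GovBisimCond R ∧ R v w) := by
  constructor
  · intro R hsym
    constructor
    · -- GovBisim → DirectSim
      intro hgb v w hvw
      obtain ⟨hp, hc2, hc3⟩ := hgb v w hvw
      refine ⟨hp, ?_, ?_⟩
      · intro hv v' hv'
        by_cases how : G.owner w = true
        · simp only [ParityGame.stepEven, how, if_pos]
          obtain ⟨w', hw', hr⟩ := hc3 v' hv'
          exact ⟨w', hw', hr⟩
        · simp only [ParityGame.stepEven, how, if_neg, if_false]
          intro w' hw'
          exact hc2 (by simp [hv, Bool.eq_false_iff.mpr how]) v' w' hv' hw'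
      · intro hv
        by_cases how : G.owner w = true
        · simp only [ParityGame.stepEven, how, if_pos]
          obtain ⟨v', hv'⟩ := G.total v
          obtain ⟨w', hw', hr⟩ := hc3 v' hv'
          exact ⟨w', hw', v', hv', hr⟩
        · simp only [ParityGame.stepEven, how, if_neg, if_false]
          intro w' hw'
          obtain ⟨v', hv', hr⟩ := (hgb w v (hsym hvw)).2.2 w' hw'
          exact ⟨v', hv', hsym hr⟩
    · -- DirectSim → GovBisim
      intro hds v w hvw
      obtain ⟨hp, hc2, hc3⟩ := hds v w hvw
      obtain ⟨hp', hc2', hc3'⟩ := hds w v (hsym hvw)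
      refine ⟨hp, ?_, ?_⟩
      · intro hne v' w' hv' hw'
        by_cases hov : G.owner v = true
        · have how : G.owner w = false := by
            cases h : G.owner w
            · rfl
            · exact absurd (hov.trans h.symm) hne
          have := hc2 hov v' hv'
          simp only [ParityGame.stepEven, how] at this
          exact this w' hw'
        · have hov' : G.owner v = false := Bool.eq_false_iff.mpr hov
          have how : G.owner w = true := by
            cases h : G.owner w
            · exact absurd (hov'.trans h.symm) hne
            · rfl
          have := hc2' how w' hw'
          simp only [ParityGame.stepEven, hov'] at this
          exact hsym (this v' hv')
      · intro v' hv'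
        by_cases hov : G.owner v = true
        · have := hc2 hov v' hv'
          by_cases how : G.owner w = true
          · simp only [ParityGame.stepEven, how] at this
            exact this
          · simp only [ParityGame.stepEven, how, if_neg, if_false] at this
            obtain ⟨w', hw'⟩ := G.total w
            exact ⟨w', hw', this w' hw'⟩
        · have hov' : G.owner v = false := Bool.eq_false_iff.mpr hov
          by_cases how : G.owner w = true
          · -- owners differ: all pairs related via hc2'
            have hall := hc2' how
            obtain ⟨w', hw'⟩ := G.total w
            have := hall w' hw'
            simp only [ParityGame.stepEven, hov'] at this
            exact ⟨w', hw', hsym (this v' hv')⟩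
          · have how' : G.owner w = false := Bool.eq_false_iff.mpr how
            have := hc3' how'
            simp only [ParityGame.stepEven, hov'] at this
            obtain ⟨w', hw', hr⟩ := this v' hv'
            exact ⟨w', hw', hsym hr⟩
  · -- Equivalence
    constructor
    · intro v
      refine ⟨Eq, fun a b h => h.symm, ?_, rfl⟩
      intro a b h
      subst h
      exact ⟨rfl, fun hne => absurd rfl hne, fun v' hv' => ⟨v', hv', rfl⟩⟩
    · rintro v w ⟨R, hs, hc, hr⟩
      exact ⟨R, hs, hc, hs hr⟩
    · rintro v w u ⟨R₁, hs₁, hc₁, hr₁⟩ ⟨R₂, hs₂, hc₂, hr₂⟩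
      refine ⟨fun a b => (∃ x, R₁ a x ∧ R₂ x b) ∨ (∃ x, R₂ a x ∧ R₁ x b),
        ?_, ?_, Or.inl ⟨w, hr₁, hr₂⟩⟩
      · rintro a b (⟨x, h1, h2⟩ | ⟨x, h1, h2⟩)
        · exact Or.inr ⟨x, hs₂ h2, hs₁ h1⟩
        · exact Or.inl ⟨x, hs₁ h2, hs₂ h1⟩
      · rintro a b (⟨x, h1, h2⟩ | ⟨x, h1, h2⟩)
        · obtain ⟨hp, hcc, ht⟩ := govBisim_comp_aux hc₁ hc₂ hs₂ h1 h2
          refine ⟨hp, ?_, ?_⟩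
          · intro hne a' b' ha hb
            exact Or.inl (hcc hne a' b' ha hb)
          · intro a' ha
            obtain ⟨b', hb', hx⟩ := ht a' ha
            exact ⟨b', hb', Or.inl hx⟩
        · obtain ⟨hp, hcc, ht⟩ := govBisim_comp_aux hc₂ hc₁ hs₁ h1 h2
          refine ⟨hp, ?_, ?_⟩
          · intro hne a' b' ha hb
            exact Or.inr (hcc hne a' b' ha hb)
          · intro a' ha
            obtain ⟨b', hb', hx⟩ := ht a' ha
            exact ⟨b', hb', Or.inr hx⟩
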